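/- Let δ > 0 and x ∈ B_δ(0) ⊂ ℝ^m. Then (∂/∂t) ∫_{B_δ(0)} p(x,y;t) dy ≤ −(m ω_m δ^m / (2t(4πt)^{m/2})) e^{−δ²/t} for all t > 0, where ω_m = |B_1(0)|. -/

import Mathlib

/-!
Parabolic scaling: substituting `y = x + √(s/t) (y' - x)` turns `F(s) = ∫_K p(x,y;s) dy`,
`K = B_δ(0)`, into the time-`t` integral over the image of `K` under the homothety of centre `x`
and ratio `√(t/s)`. For `s > t` this image lies inside `K` (a convex set containing
`x`) and has measure `(t/s)^{m/2} |K|`, while on `K` the kernel is at least its value at distance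
`2δ`. Hence `F(s) - F(t) ≤ -(4πt)^{-m/2} e^{-δ²/t} |K| (1 - (t/s)^{m/2})`; dividing by `s - t` and
letting `s ↓ t` bounds `F'(t)`, and `F` is differentiable by differentiation under the integral.
-/

open Real MeasureTheory Set Filter Topology Module

noncomputable def heatKernel (d : ℕ) (s r : ℝ) : ℝ :=
  (4 * π * s) ^ (-(d : ℝ) / 2) * exp (-r ^ 2 / (4 * s))

lemma le_of_hasDerivAt_of_sub_le {f g : ℝ → ℝ} {f' g' t : ℝ} (hf : HasDerivAt f f' t)
    (hg : HasDerivAt g g' t) (h : ∀ᶠ s in 𝓝[>] t, f s - f t ≤ g s - g t) : f' ≤ g' := by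
  have hslope : ∀ {φ : ℝ → ℝ} {φ'}, HasDerivAt φ φ' t → Tendsto (slope φ t) (𝓝[>] t) (𝓝 φ') :=
    fun hφ => (hasDerivWithinAt_iff_tendsto_slope' (lt_irrefl t)).1 hφ.hasDerivWithinAt
  refine le_of_tendsto_of_tendsto (hslope hf) (hslope hg) ?_
  filter_upwards [h, self_mem_nhdsWithin] with s hs (hts : t < s)
  simp only [slope_def_field]
  exact div_le_div_of_nonneg_right hs (sub_pos.2 hts).le

lemma measure_ne_top_of_forall_dist_le {X : Type*} [PseudoMetricSpace X] [ProperSpace X]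
    [MeasurableSpace X] {μ : Measure X} [IsFiniteMeasureOnCompacts μ] {K : Set X} {x : X} {R : ℝ}
    (hR : ∀ y ∈ K, dist x y ≤ R) : μ K ≠ ⊤ :=
  ((measure_mono fun y hy => Metric.mem_closedBall'.2 (hR y hy)).trans_lt
    measure_closedBall_lt_top).ne

section HeatKernel

variable {d : ℕ} {s t r R c : ℝ}

lemma heatKernel_pos (hs : 0 < s) : 0 < heatKernel d s r := by
  unfold heatKernel
  positivity

lemma heatKernel_le (hs : 0 < s) : heatKernel d s r ≤ (4 * π * s) ^ (-(d : ℝ) / 2) := by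
  unfold heatKernel
  exact mul_le_of_le_one_right (by positivity) (exp_le_one_iff.2
    (div_nonpos_of_nonpos_of_nonneg (neg_nonpos.2 (sq_nonneg r)) (by positivity)))

lemma heatKernel_le_of_le (hr : 0 ≤ r) (hrR : r ≤ R) (hs : 0 < s) :
    heatKernel d s R ≤ heatKernel d s r := by
  unfold heatKernel
  gcongr

lemma hasDerivAt_heatKernel (hs : 0 < s) :
    HasDerivAt (fun u => heatKernel d u r)
      (heatKernel d s r * (r ^ 2 / (4 * s ^ 2) - d / (2 * s))) s := by
  have h := (((hasDerivAt_id' s).const_mul (4 * π)).rpow_const (p := -(d : ℝ) / 2)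
    (Or.inl (by positivity))).mul
    ((hasDerivAt_const s (-r ^ 2)).div ((hasDerivAt_id' s).const_mul 4) (by positivity)).exp
  refine h.congr_deriv ?_
  simp only [Pi.div_apply]
  rw [Real.rpow_sub_one (by positivity)]
  unfold heatKernel
  field_simp
  ring

lemma abs_deriv_heatKernel_le (hs : 0 < s) :
    |heatKernel d s r * (r ^ 2 / (4 * s ^ 2) - d / (2 * s))|
      ≤ (4 * π * s) ^ (-(d : ℝ) / 2) * (1 + d / 2) / s := by
  set u := r ^ 2 / (4 * s)
  have hu : 0 ≤ u := by positivity
  -- `u e^{-u} ≤ 1` absorbs the factor `r²`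
  have hue : u * exp (-u) ≤ 1 := (mul_exp_neg_le_exp_neg_one u).trans (by simp)
  have he : exp (-u) ≤ 1 := exp_le_one_iff.2 (by linarith)
  have hform : heatKernel d s r * (r ^ 2 / (4 * s ^ 2) - d / (2 * s))
      = (4 * π * s) ^ (-(d : ℝ) / 2) * (u * exp (-u) - d / 2 * exp (-u)) / s := by
    unfold heatKernel u
    rw [neg_div]
    field_simp
  rw [hform, abs_div, abs_mul, abs_of_pos hs, abs_of_pos (by positivity)]
  gcongr
  rw [abs_le]
  constructor <;> nlinarith [exp_pos (-u), (by positivity : (0 : ℝ) ≤ d / 2)]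

lemma heatKernel_scale (hc : 0 < c) (ht : 0 < t) :
    c ^ d * heatKernel d t (c * r) = heatKernel d (t / c ^ 2) r := by
  unfold heatKernel
  have hcd : c ^ d = (c ^ 2) ^ ((d : ℝ) / 2) := by
    rw [← Real.rpow_natCast, ← Real.rpow_natCast, ← Real.rpow_mul hc.le]
    ring_nf
  rw [hcd, show 4 * π * (t / c ^ 2) = (4 * π * t) / c ^ 2 by ring,
    Real.div_rpow (by positivity) (by positivity), neg_div, Real.rpow_neg (by positivity),
    Real.rpow_neg (by positivity)]
  field_simp

end HeatKernel

section MetricMeasureSpace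

variable {X : Type*} [PseudoMetricSpace X] [MeasurableSpace X] [OpensMeasurableSpace X]
  {μ : Measure X} {K : Set X} {d : ℕ} {t : ℝ}

lemma integrableOn_heatKernel_dist (hK : μ K ≠ ⊤) (x : X) (ht : 0 < t) :
    IntegrableOn (fun y => heatKernel d t (dist x y)) K μ :=
  (integrableOn_const (C := (4 * π * t) ^ (-(d : ℝ) / 2)) hK).mono'
    (Continuous.aestronglyMeasurable (by unfold heatKernel; fun_prop))
    (Eventually.of_forall fun _ => by
      rw [Real.norm_of_nonneg (heatKernel_pos ht).le]
      exact heatKernel_le ht)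

lemma hasDerivAt_setIntegral_heatKernel (hK : μ K ≠ ⊤) (x : X) (ht : 0 < t) :
    HasDerivAt (fun s => ∫ y in K, heatKernel d s (dist x y) ∂μ)
      (∫ y in K, heatKernel d t (dist x y) * (dist x y ^ 2 / (4 * t ^ 2) - d / (2 * t)) ∂μ) t := by
  refine (hasDerivAt_integral_of_dominated_loc_of_deriv_le (Ioi_mem_nhds (half_lt_self ht))
    (F := fun s y => heatKernel d s (dist x y))
    (Eventually.of_forall fun s =>
      Continuous.aestronglyMeasurable (by unfold heatKernel; fun_prop))
    (integrableOn_heatKernel_dist hK x ht)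
    (F' := fun s y => heatKernel d s (dist x y) * (dist x y ^ 2 / (4 * s ^ 2) - d / (2 * s)))
    (Continuous.aestronglyMeasurable (by unfold heatKernel; fun_prop))
    (bound := fun _ => (2 * π * t) ^ (-(d : ℝ) / 2) * (1 + d / 2) / (t / 2)) ?_
    (integrableOn_const hK) ?_).2
  · refine Eventually.of_forall fun y s (hs : t / 2 < s) => ?_
    rw [Real.norm_eq_abs]
    refine (abs_deriv_heatKernel_le ((half_pos ht).trans hs)).trans ?_
    gcongr ?_ * _ / ?_
    exact Real.rpow_le_rpow_of_nonpos (by positivity) (by nlinarith [pi_pos])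
      (by have : (0 : ℝ) ≤ d := d.cast_nonneg; linarith)
  · exact Eventually.of_forall fun y s (hs : t / 2 < s) =>
      hasDerivAt_heatKernel ((half_pos ht).trans hs)

end MetricMeasureSpace

section AddHaar

variable {E : Type*} [NormedAddCommGroup E] [NormedSpace ℝ E] [FiniteDimensional ℝ E]
  [MeasurableSpace E] [BorelSpace E] {μ : Measure E} [μ.IsAddHaarMeasure]
  {K : Set E} {x : E} {c t R : ℝ}

lemma setIntegral_image_homothety {F : Type*} [NormedAddCommGroup F] [NormedSpace ℝ F]
    (hK : MeasurableSet K) (hc : c ≠ 0) (f : E → F) :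
    ∫ y in AffineMap.homothety x c '' K, f y ∂μ
      = |c ^ finrank ℝ E| • ∫ y in K, f (AffineMap.homothety x c y) ∂μ := by
  have hderiv : ∀ y, HasFDerivAt (AffineMap.homothety x c) (c • ContinuousLinearMap.id ℝ E) y :=
    fun y => by
      simpa [AffineMap.coe_homothety] using
        (((hasFDerivAt_id y).sub_const x).const_smul c).add_const x
  rw [integral_image_eq_integral_abs_det_fderiv_smul μ hK
    (fun y _ => (hderiv y).hasFDerivWithinAt) (AffineMap.homothety_injective x hc).injOn,
    integral_smul]
  simp [ContinuousLinearMap.det, LinearMap.det_smul]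

lemma setIntegral_heatKernel_image_homothety (hK : MeasurableSet K) (hc : 0 < c) (ht : 0 < t) :
    ∫ y in AffineMap.homothety x c '' K, heatKernel (finrank ℝ E) t (dist x y) ∂μ
      = ∫ y in K, heatKernel (finrank ℝ E) (t / c ^ 2) (dist x y) ∂μ := by
  rw [setIntegral_image_homothety hK hc.ne', abs_of_pos (by positivity), ← integral_smul]
  simp only [dist_center_homothety, Real.norm_of_nonneg hc.le, smul_eq_mul, heatKernel_scale hc ht]

lemma setIntegral_heatKernel_sub_le (hKx : StarConvex ℝ x K) (hK : MeasurableSet K)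
    (hR : ∀ y ∈ K, dist x y ≤ R) (hc0 : 0 < c) (hc1 : c ≤ 1) (ht : 0 < t) :
    ∫ y in K, heatKernel (finrank ℝ E) (t / c ^ 2) (dist x y) ∂μ
        - ∫ y in K, heatKernel (finrank ℝ E) t (dist x y) ∂μ
      ≤ -(heatKernel (finrank ℝ E) t R * (μ.real K * (1 - c ^ finrank ℝ E))) := by
  set H := AffineMap.homothety x c '' K
  have hHK : H ⊆ K := by
    rintro _ ⟨y, hy, rfl⟩
    simpa [AffineMap.homothety_apply, add_comm] using hKx.add_smul_sub_mem hy hc0.le hc1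
  have hH : MeasurableSet H := hK.image_of_continuousOn_injOn
    (AffineMap.homothety_continuous x c).continuousOn
    (AffineMap.homothety_injective x hc0.ne').injOn
  have hKfin : μ K ≠ ⊤ := measure_ne_top_of_forall_dist_le hR
  have hint := integrableOn_heatKernel_dist (d := finrank ℝ E) hKfin x ht
  have hmeasH : μ.real H = c ^ finrank ℝ E * μ.real K := by
    simp [H, measureReal_def, Measure.addHaar_image_homothety, ENNReal.toReal_mul,
      abs_of_pos hc0, hc0.le]
  have hlow : heatKernel (finrank ℝ E) t R * μ.real (K \ H)
      ≤ ∫ y in K \ H, heatKernel (finrank ℝ E) t (dist x y) ∂μ :=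
    setIntegral_ge_of_const_le_real (hK.diff hH) (measure_ne_top_of_subset sdiff_subset hKfin)
      (fun y hy => heatKernel_le_of_le dist_nonneg (hR y hy.1) ht) (hint.mono_set sdiff_subset)
  rw [setIntegral_sdiff hH hint hHK, measureReal_sdiff hHK hH hKfin, hmeasH] at hlow
  rw [← setIntegral_heatKernel_image_homothety hK hc0 ht]
  linarith

lemma deriv_setIntegral_heatKernel_le (hKx : StarConvex ℝ x K) (hK : MeasurableSet K)
    (hR : ∀ y ∈ K, dist x y ≤ R) (ht : 0 < t) :
    deriv (fun s => ∫ y in K, heatKernel (finrank ℝ E) s (dist x y) ∂μ) t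
      ≤ -(finrank ℝ E * μ.real K / (2 * t)) * heatKernel (finrank ℝ E) t R := by
  set d := finrank ℝ E
  have hF := hasDerivAt_setIntegral_heatKernel (d := d) (measure_ne_top_of_forall_dist_le (μ := μ) hR) x ht
  set p := heatKernel d t R
  -- `g s - g t` is the bound of `setIntegral_heatKernel_sub_le` for the ratio `√(t / s)`
  set g := fun s => p * μ.real K * √(t / s) ^ d
  have hg : HasDerivAt g (-(d * μ.real K / (2 * t)) * p) t := by
    refine ((((hasDerivAt_const t t).div (hasDerivAt_id' t) ht.ne').sqrt
      (by simp [ht.ne'])).pow d |>.const_mul (p * μ.real K)).congr_deriv ?_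
    simp only [Pi.div_apply, div_self ht.ne', Real.sqrt_one, one_pow]
    field_simp
    ring
  rw [hF.deriv]
  refine le_of_hasDerivAt_of_sub_le hF hg ?_
  filter_upwards [self_mem_nhdsWithin] with s (hts : t < s)
  have hs : 0 < s := ht.trans hts
  have hc0 : 0 < √(t / s) := Real.sqrt_pos.2 (div_pos ht hs)
  have hc1 : √(t / s) ≤ 1 := Real.sqrt_le_one.2 ((div_le_one hs).2 hts.le)
  have hcs : t / √(t / s) ^ 2 = s := by
    rw [Real.sq_sqrt (div_pos ht hs).le]
    field_simp
  have key := setIntegral_heatKernel_sub_le (μ := μ) hKx hK hR hc0 hc1 ht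
  rw [hcs] at key
  simp only [g, div_self ht.ne', Real.sqrt_one, one_pow]
  linarith

end AddHaar

theorem ball_temperature_deriv_upper_bound_general (m : ℕ)
    (δ : ℝ) (x : EuclideanSpace ℝ (Fin m))
    (hx : x ∈ Metric.ball (0 : EuclideanSpace ℝ (Fin m)) δ) (t : ℝ) (ht : 0 < t) :
    deriv (fun s : ℝ => ∫ y in Metric.ball (0 : EuclideanSpace ℝ (Fin m)) δ,
        (4 * Real.pi * s) ^ (-(m : ℝ) / 2) * Real.exp (-(dist x y) ^ 2 / (4 * s))) t
      ≤ -((m : ℝ) * (volume (Metric.ball (0 : EuclideanSpace ℝ (Fin m)) 1)).toReal * δ ^ m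
            / (2 * t * (4 * Real.pi * t) ^ ((m : ℝ) / 2)))
          * Real.exp (-δ ^ 2 / t) := by
  have hδ : 0 < δ := (norm_nonneg x).trans_lt (mem_ball_zero_iff.1 hx)
  have hR : ∀ y ∈ Metric.ball 0 δ, dist x y ≤ 2 * δ := fun y hy => by
    linarith [dist_triangle x 0 y, mem_ball_zero_iff.1 hx, mem_ball_zero_iff.1 hy,
      dist_zero_right x, dist_zero_left y]
  have h := deriv_setIntegral_heatKernel_le (μ := volume) ((convex_ball 0 δ).starConvex hx)
    measurableSet_ball hR ht
  rw [finrank_euclideanSpace_fin] at h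
  have hexp : -(2 * δ) ^ 2 / (4 * t) = -δ ^ 2 / t := by
    field_simp
    ring
  refine h.trans_eq ?_
  rw [measureReal_def, Measure.addHaar_ball_of_pos _ _ hδ, ENNReal.toReal_mul,
    ENNReal.toReal_ofReal (by positivity), finrank_euclideanSpace_fin, heatKernel, hexp,
    neg_div (2 : ℝ) (m : ℝ), Real.rpow_neg (by positivity)]
  field_simp

theorem ball_temperature_deriv_upper_bound (m : ℕ) (hm : 1 ≤ m)
    (δ : ℝ) (hδ : 0 < δ) (x : EuclideanSpace ℝ (Fin m))
    (hx : x ∈ Metric.ball (0 : EuclideanSpace ℝ (Fin m)) δ) (t : ℝ) (ht : 0 < t) :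
    deriv (fun s : ℝ => ∫ y in Metric.ball (0 : EuclideanSpace ℝ (Fin m)) δ,
        (4 * Real.pi * s) ^ (-(m : ℝ) / 2) * Real.exp (-(dist x y) ^ 2 / (4 * s))) t
      ≤ -((m : ℝ) * (volume (Metric.ball (0 : EuclideanSpace ℝ (Fin m)) 1)).toReal * δ ^ m
            / (2 * t * (4 * Real.pi * t) ^ ((m : ℝ) / 2)))
          * Real.exp (-δ ^ 2 / t) :=
  ball_temperature_deriv_upper_bound_general m δ x hx t ht
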